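/- arXiv:2404.07231 — 2 statements merged into one kernel-verified Lean document; each statement's English description precedes it below -/
import Mathlib

section
/- If M is a uniformly random perfect matching on 2d elements, and Tr_sum(M) denotes half the trace of the sum over all products \sigma_1 \cdots \sigma_{2d} of Pauli matrices in \{X,Y,Z\} subject to \sigma_i = \sigma_j whenever i and j are matched by M, then E_M[Tr_sum(M)] = 2d + 1. -/
open Matrix Finset

noncomputable def PauliX : Matrix (Fin 2) (Fin 2) ℂ := !![0, 1; 1, 0]
noncomputable def PauliY : Matrix (Fin 2) (Fin 2) ℂ := !![0, -Complex.I; Complex.I, 0]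
noncomputable def PauliZ : Matrix (Fin 2) (Fin 2) ℂ := !![1, 0; 0, -1]

noncomputable def pauli3 : Fin 3 → Matrix (Fin 2) (Fin 2) ℂ := ![PauliX, PauliY, PauliZ]

/-- A perfect matching of `[2d]` encoded as a fixed-point-free involution. -/
def perfectMatchings (d : ℕ) : Finset (Equiv.Perm (Fin (2 * d))) :=
  Finset.univ.filter (fun m => (∀ i, m (m i) = i) ∧ ∀ i, m i ≠ i)

/-- `Tr_sum(M)`: half the trace of the sum over all assignments of Paulis `X, Y, Z`
to positions `1, …, 2d` respecting the matching (`σᵢ = σⱼ` whenever `i` and `j` are matched)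
of the ordered product `σ₁ ⋯ σ_{2d}`. -/
noncomputable def trSum (d : ℕ) (m : Equiv.Perm (Fin (2 * d))) : ℂ :=
  (1 / 2 : ℂ) * ∑ σ ∈ Finset.univ.filter
      (fun σ : Fin (2 * d) → Fin 3 => ∀ i, σ i = σ (m i)),
    ((List.ofFn fun i => pauli3 (σ i)).prod).trace

open Equiv

lemma pauli_mul_self (a : Fin 3) : pauli3 a * pauli3 a = 1 := by
  fin_cases a <;>
    simp [pauli3, PauliX, PauliY, PauliZ, Matrix.mul_fin_two, Matrix.one_fin_two,
      Complex.I_mul_I]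

lemma pauli_anticomm (a b : Fin 3) :
    pauli3 a * pauli3 b + pauli3 b * pauli3 a = if a = b then (2:ℂ) • 1 else 0 := by
  fin_cases a <;> fin_cases b <;>
    simp [pauli3, PauliX, PauliY, PauliZ, Matrix.mul_fin_two, Matrix.one_fin_two,
      Matrix.smul_of, Complex.I_mul_I, ← Matrix.ext_iff, Fin.forall_fin_two] <;> norm_num

lemma trace_mul_anticomm (W : Matrix (Fin 2) (Fin 2) ℂ) (a b : Fin 3) :
    (W * pauli3 a * pauli3 b).trace + (W * pauli3 b * pauli3 a).trace
      = if a = b then 2 * W.trace else 0 := by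
  rw [← Matrix.trace_add, mul_assoc, mul_assoc, ← mul_add, pauli_anticomm]
  split
  · rw [Matrix.mul_smul, mul_one, Matrix.trace_smul]; simp
  · simp

/-- fixed point free involutions -/
def FPFI (n : ℕ) : Finset (Equiv.Perm (Fin n)) :=
  Finset.univ.filter (fun m => (∀ i, m (m i) = i) ∧ ∀ i, m i ≠ i)

lemma mem_FPFI {n : ℕ} {m : Equiv.Perm (Fin n)} :
    m ∈ FPFI n ↔ (∀ i, m (m i) = i) ∧ ∀ i, m i ≠ i := by simp [FPFI]

noncomputable def TS (n : ℕ) (m : Equiv.Perm (Fin n)) : ℂ :=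
  ∑ σ ∈ Finset.univ.filter (fun σ : Fin n → Fin 3 => ∀ i, σ i = σ (m i)),
    ((List.ofFn fun i => pauli3 (σ i)).prod).trace

variable {n : ℕ}

def emb (k : Fin n) : Fin (n+2) := ⟨k.1, by omega⟩
def uu (n : ℕ) : Fin (n+2) := ⟨n, by omega⟩
def vv (n : ℕ) : Fin (n+2) := ⟨n+1, by omega⟩

lemma emb_ne_uu (k : Fin n) : emb k ≠ uu n := by
  simp only [emb, uu, Fin.ne_iff_vne]; exact k.2.ne
lemma emb_ne_vv (k : Fin n) : emb k ≠ vv n := by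
  simp only [emb, vv, Fin.ne_iff_vne]; omega
lemma uu_ne_vv : uu n ≠ vv n := by simp [uu, vv, Fin.ne_iff_vne]
lemma emb_injective : Function.Injective (emb (n := n)) := by
  intro a b h; simpa [emb, Fin.ext_iff] using h
lemma emb_inj {a b : Fin n} : emb a = emb b ↔ a = b := emb_injective.eq_iff

lemma cases3 (k : Fin (n+2)) : (∃ k' : Fin n, k = emb k') ∨ k = uu n ∨ k = vv n := by
  rcases lt_or_ge k.1 n with h | h
  · exact Or.inl ⟨⟨k.1, h⟩, by simp [emb, Fin.ext_iff]⟩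
  · have := k.2
    rcases Nat.lt_or_ge k.1 (n+1) with h2 | h2
    · exact Or.inr (Or.inl (by simp [uu, Fin.ext_iff]; omega))
    · exact Or.inr (Or.inr (by simp [vv, Fin.ext_iff]; omega))

def extσ (τ : Fin n → Fin 3) (a b : Fin 3) : Fin (n+2) → Fin 3 :=
  fun k => if h : k.1 < n then τ ⟨k.1, h⟩ else if k.1 = n then a else b

@[simp] lemma extσ_emb (τ : Fin n → Fin 3) (a b : Fin 3) (k : Fin n) :
    extσ τ a b (emb k) = τ k := by simp [extσ, emb, k.2]
@[simp] lemma extσ_uu (τ : Fin n → Fin 3) (a b : Fin 3) : extσ τ a b (uu n) = a := by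
  simp [extσ, uu]
@[simp] lemma extσ_vv (τ : Fin n → Fin 3) (a b : Fin 3) : extσ τ a b (vv n) = b := by
  simp [extσ, vv]

private def EF (p : Equiv.Perm (Fin n)) : Fin (n+2) → Fin (n+2) :=
  fun k => if h : k.1 < n then emb (p ⟨k.1, h⟩) else if k.1 = n then vv n else uu n

private lemma EF_EF (p q : Equiv.Perm (Fin n)) (hpq : ∀ x, q (p x) = x) (k : Fin (n+2)) :
    EF q (EF p k) = k := by
  rcases cases3 k with ⟨k', rfl⟩ | rfl | rfl
  · have h1 : EF p (emb k') = emb (p k') := by simp [EF, emb, k'.2]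
    rw [h1]
    have h2 : EF q (emb (p k')) = emb (q (p k')) := by simp [EF, emb, (p k').2]
    rw [h2, hpq]
  · have h1 : EF p (uu n) = vv n := by simp [EF, uu]
    have h2 : EF q (vv n) = uu n := by simp [EF, vv]
    rw [h1, h2]
  · have h1 : EF p (vv n) = uu n := by simp [EF, vv]
    have h2 : EF q (uu n) = vv n := by simp [EF, uu]
    rw [h1, h2]

def extPerm (p : Equiv.Perm (Fin n)) : Equiv.Perm (Fin (n+2)) :=
  ⟨EF p, EF p⁻¹, EF_EF p p⁻¹ (fun x => by simp),
    EF_EF p⁻¹ p (fun x => by simp)⟩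

@[simp] lemma extPerm_emb (p : Equiv.Perm (Fin n)) (k : Fin n) :
    extPerm p (emb k) = emb (p k) := by
  show EF p (emb k) = _; simp [EF, emb, k.2]
@[simp] lemma extPerm_uu (p : Equiv.Perm (Fin n)) : extPerm p (uu n) = vv n := by
  show EF p (uu n) = _; simp [EF, uu]
@[simp] lemma extPerm_vv (p : Equiv.Perm (Fin n)) : extPerm p (vv n) = uu n := by
  show EF p (vv n) = _; simp [EF, vv]

lemma conj_mem_FPFI {N : ℕ} (c m : Equiv.Perm (Fin N)) (hc : ∀ x, c (c x) = x)
    (hm : m ∈ FPFI N) : c * m * c ∈ FPFI N := by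
  rw [mem_FPFI] at hm ⊢
  obtain ⟨h1, h2⟩ := hm
  constructor
  · intro k; simp only [Equiv.Perm.mul_apply]; rw [hc, h1, hc]
  · intro k hk
    simp only [Equiv.Perm.mul_apply] at hk
    have h3 := congrArg c hk
    rw [hc] at h3
    exact h2 (c k) h3

lemma extPerm_mem {p : Equiv.Perm (Fin n)} (hp : p ∈ FPFI n) : extPerm p ∈ FPFI (n+2) := by
  rw [mem_FPFI] at hp ⊢
  obtain ⟨h1, h2⟩ := hp
  constructor
  · intro k
    rcases cases3 k with ⟨k', rfl⟩ | rfl | rfl <;> simp [h1]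
  · intro k
    rcases cases3 k with ⟨k', rfl⟩ | rfl | rfl
    · simp [emb_inj]; exact h2 k'
    · simp only [extPerm_uu]; exact uu_ne_vv.symm
    · simp only [extPerm_vv]; exact uu_ne_vv

def mB (p : Equiv.Perm (Fin n)) (i : Fin n) : Equiv.Perm (Fin (n+2)) :=
  (Equiv.swap (uu n) (emb (p i))) * extPerm p * (Equiv.swap (uu n) (emb (p i)))

section mBeval
variable (p : Equiv.Perm (Fin n)) (i : Fin n)

lemma mB_uu (hp1 : ∀ x, p (p x) = x) (hp2 : ∀ x, p x ≠ x) : mB p i (uu n) = emb i := by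
  simp only [mB, Equiv.Perm.mul_apply, Equiv.swap_apply_left]
  rw [extPerm_emb, hp1]
  rw [Equiv.swap_apply_of_ne_of_ne (emb_ne_uu i) (by rw [Ne, emb_inj]; exact fun h => hp2 i (h ▸ rfl))]

lemma mB_vv : mB p i (vv n) = emb (p i) := by
  simp only [mB, Equiv.Perm.mul_apply]
  rw [Equiv.swap_apply_of_ne_of_ne uu_ne_vv.symm (emb_ne_vv _).symm, extPerm_vv,
    Equiv.swap_apply_left]

lemma mB_i (hp2 : ∀ x, p x ≠ x) : mB p i (emb i) = uu n := by
  simp only [mB, Equiv.Perm.mul_apply]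
  rw [Equiv.swap_apply_of_ne_of_ne (emb_ne_uu i) (by rw [Ne, emb_inj]; exact fun h => hp2 i (h ▸ rfl)),
    extPerm_emb, Equiv.swap_apply_right]

lemma mB_pi : mB p i (emb (p i)) = vv n := by
  simp only [mB, Equiv.Perm.mul_apply]
  rw [Equiv.swap_apply_right, extPerm_uu,
    Equiv.swap_apply_of_ne_of_ne uu_ne_vv.symm (emb_ne_vv _).symm]

lemma mB_other (hp1 : ∀ x, p (p x) = x) (k : Fin n) (hki : k ≠ i) (hkpi : k ≠ p i) : mB p i (emb k) = emb (p k) := by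
  simp only [mB, Equiv.Perm.mul_apply]
  rw [Equiv.swap_apply_of_ne_of_ne (emb_ne_uu k) (by rw [Ne, emb_inj]; exact hkpi), extPerm_emb,
    Equiv.swap_apply_of_ne_of_ne (emb_ne_uu _)
      (by rw [Ne, emb_inj]; exact fun h => hki (by rw [← hp1 k, h, hp1]))]

lemma mB_mem (hp : p ∈ FPFI n) : mB p i ∈ FPFI (n+2) :=
  conj_mem_FPFI _ _ (fun x => Equiv.swap_apply_self _ _ x) (extPerm_mem hp)

end mBeval

lemma prod_ext (τ : Fin n → Fin 3) (a b : Fin 3) :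
    (List.ofFn fun k : Fin (n+2) => pauli3 (extσ τ a b k)).prod
      = (List.ofFn fun k : Fin n => pauli3 (τ k)).prod * pauli3 a * pauli3 b := by
  have e0 : (Fin.natAdd n (0 : Fin 2)) = uu n := by ext; simp [uu]
  have e1 : (Fin.natAdd n (1 : Fin 2)) = vv n := by ext; simp [vv]
  have hc : ∀ k : Fin n, extσ τ a b (Fin.castAdd 2 k) = τ k := by
    intro k
    have : Fin.castAdd 2 k = emb k := by ext; simp [emb]
    rw [this, extσ_emb]
  rw [List.ofFn_add (f := fun k : Fin (n+2) => pauli3 (extσ τ a b k)), List.prod_append]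
  have h1 : (List.ofFn fun k : Fin n => pauli3 (extσ τ a b (Fin.castAdd 2 k)))
      = List.ofFn fun k : Fin n => pauli3 (τ k) := by
    congr 1; funext k; rw [hc]
  have h2 : (List.ofFn fun j : Fin 2 => pauli3 (extσ τ a b (Fin.natAdd n j)))
      = [pauli3 a, pauli3 b] := by
    simp only [List.ofFn_succ, List.ofFn_zero, Fin.succ_zero_eq_one]
    rw [e0, e1, extσ_uu, extσ_vv]
  rw [show (List.ofFn fun i : Fin n => pauli3 (extσ τ a b (Fin.castLE (by omega) i)))
      = List.ofFn fun k : Fin n => pauli3 (τ k) from h1, h2]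
  simp [mul_assoc]

lemma caseA_surj {m : Equiv.Perm (Fin (n+2))} (hm : m ∈ FPFI (n+2)) (hmv : m (vv n) = uu n) :
    ∃ p ∈ FPFI n, extPerm p = m := by
  rw [mem_FPFI] at hm
  obtain ⟨h1, h2⟩ := hm
  have hmu : m (uu n) = vv n := by rw [← hmv, h1]
  have bound : ∀ k : Fin n, (m (emb k)).1 < n := by
    intro k
    have hne1 : m (emb k) ≠ uu n := by
      intro h
      have : emb k = m (uu n) := by rw [← h, h1]
      rw [hmu] at this; exact emb_ne_vv k this
    have hne2 : m (emb k) ≠ vv n := by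
      intro h
      have : emb k = m (vv n) := by rw [← h, h1]
      rw [hmv] at this; exact emb_ne_uu k this
    have hlt := (m (emb k)).2
    simp only [uu, vv, Fin.ne_iff_vne] at hne1 hne2
    omega
  have hinv : Function.Involutive (fun k : Fin n => (⟨(m (emb k)).1, bound k⟩ : Fin n)) := by
    intro k
    have he : emb (⟨(m (emb k)).1, bound k⟩ : Fin n) = m (emb k) := by ext; simp [emb]
    simp only [he]
    ext; simp [emb, h1]
  refine ⟨hinv.toPerm _, ?_, ?_⟩
  · rw [mem_FPFI]
    refine ⟨fun k => hinv k, fun k hk => ?_⟩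
    have hval : (m (emb k)).1 = k.1 := congrArg Fin.val hk
    exact h2 (emb k) (Fin.ext (by simpa [emb] using hval))
  · ext k
    rcases cases3 k with ⟨k', rfl⟩ | rfl | rfl
    · rw [extPerm_emb]
      have ht : (Function.Involutive.toPerm _ hinv) k' = ⟨(m (emb k')).1, bound k'⟩ :=
        rfl
      rw [ht]
      simp [emb, Fin.ext_iff]
    · rw [extPerm_uu, hmu]
    · rw [extPerm_vv, hmv]

lemma L2A {p : Equiv.Perm (Fin n)} (hp : p ∈ FPFI n) :
    TS (n+2) (extPerm p) = 3 * TS n p := by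
  rw [mem_FPFI] at hp
  obtain ⟨hp1, hp2⟩ := hp
  have key : TS (n+2) (extPerm p)
      = ∑ x ∈ (Finset.univ.filter (fun τ : Fin n → Fin 3 => ∀ k, τ k = τ (p k))) ×ˢ
          (Finset.univ : Finset (Fin 3)),
        ((List.ofFn fun k : Fin (n+2) => pauli3 (extσ x.1 x.2 x.2 k)).prod).trace := by
    rw [TS]
    refine (Finset.sum_bij (fun x _ => extσ x.1 x.2 x.2) ?_ ?_ ?_ ?_).symm
    · rintro ⟨τ, a⟩ hx
      simp only [Finset.mem_product, Finset.mem_filter, Finset.mem_univ, true_and] at hx ⊢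
      intro k
      rcases cases3 k with ⟨k', rfl⟩ | rfl | rfl
      · rw [extPerm_emb, extσ_emb, extσ_emb]; exact hx.1 k'
      · rw [extPerm_uu, extσ_uu, extσ_vv]
      · rw [extPerm_vv, extσ_vv, extσ_uu]
    · rintro ⟨τ, a⟩ hx ⟨τ', a'⟩ hx' h
      have ht : τ = τ' := funext fun k => by
        have := congrFun h (emb k); simpa using this
      have ha : a = a' := by
        have := congrFun h (uu n); simpa using this
      simp [ht, ha]
    · intro σ hσ
      simp only [Finset.mem_filter, Finset.mem_univ, true_and] at hσ
      refine ⟨⟨fun k => σ (emb k), σ (uu n)⟩, ?_, ?_⟩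
      · simp only [Finset.mem_product, Finset.mem_filter, Finset.mem_univ, true_and, and_true]
        intro k
        have := hσ (emb k); rwa [extPerm_emb] at this
      · funext k
        rcases cases3 k with ⟨k', rfl⟩ | rfl | rfl
        · simp
        · simp
        · simp only [extσ_vv]
          have := hσ (uu n); rw [extPerm_uu] at this; exact this
    · intro x hx; rfl
  rw [key, Finset.sum_product]
  rw [TS, Finset.mul_sum]
  refine Finset.sum_congr rfl fun τ hτ => ?_
  have : ∀ a : Fin 3, ((List.ofFn fun k : Fin (n+2) => pauli3 (extσ τ a a k)).prod).trace
      = ((List.ofFn fun k : Fin n => pauli3 (τ k)).prod).trace := by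
    intro a
    rw [prod_ext, mul_assoc, pauli_mul_self, mul_one]
  simp only [this]
  rw [Finset.sum_const]
  simp

lemma L2B_decomp {p : Equiv.Perm (Fin n)} (hp : p ∈ FPFI n) (i : Fin n) :
    TS (n+2) (mB p i)
      = ∑ τ ∈ Finset.univ.filter
          (fun τ : Fin n → Fin 3 => ∀ k, k ≠ i → k ≠ p i → τ k = τ (p k)),
        ((List.ofFn fun k : Fin n => pauli3 (τ k)).prod * pauli3 (τ i) * pauli3 (τ (p i))).trace := by
  obtain ⟨hp1, hp2⟩ := mem_FPFI.mp hp
  rw [TS]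
  refine (Finset.sum_bij (fun τ _ => extσ τ (τ i) (τ (p i))) ?_ ?_ ?_ ?_).symm
  · intro τ hτ
    simp only [Finset.mem_filter, Finset.mem_univ, true_and] at hτ ⊢
    intro k
    rcases cases3 k with ⟨k', rfl⟩ | rfl | rfl
    · by_cases hki : k' = i
      · subst hki; rw [mB_i p k' hp2, extσ_emb, extσ_uu]
      · by_cases hkpi : k' = p i
        · subst hkpi; rw [mB_pi p i, extσ_emb, extσ_vv]
        · rw [mB_other p i hp1 k' hki hkpi, extσ_emb, extσ_emb]
          exact hτ k' hki hkpi
    · rw [mB_uu p i hp1 hp2, extσ_uu, extσ_emb]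
    · rw [mB_vv p i, extσ_vv, extσ_emb]
  · intro τ _ τ' _ h
    funext k
    have := congrFun h (emb k); simpa using this
  · intro σ hσ
    simp only [Finset.mem_filter, Finset.mem_univ, true_and] at hσ
    refine ⟨fun k => σ (emb k), ?_, ?_⟩
    · simp only [Finset.mem_filter, Finset.mem_univ, true_and]
      intro k hki hkpi
      have := hσ (emb k); rwa [mB_other p i hp1 k hki hkpi] at this
    · funext k
      rcases cases3 k with ⟨k', rfl⟩ | rfl | rfl
      · simp
      · simp only [extσ_uu]
        have := hσ (uu n); rw [mB_uu p i hp1 hp2] at this; exact this.symm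
      · simp only [extσ_vv]
        have := hσ (vv n); rw [mB_vv p i] at this; exact this.symm
  · intro τ hτ
    rw [prod_ext]

lemma L2B_pair {p : Equiv.Perm (Fin n)} (hp : p ∈ FPFI n) (i : Fin n) :
    TS (n+2) (mB p i) + TS (n+2) (mB p (p i)) = 2 * TS n p := by
  obtain ⟨hp1, hp2⟩ := mem_FPFI.mp hp
  rw [L2B_decomp hp i, L2B_decomp hp (p i)]
  have hset : (Finset.univ.filter
        (fun τ : Fin n → Fin 3 => ∀ k, k ≠ p i → k ≠ p (p i) → τ k = τ (p k)))
      = Finset.univ.filter (fun τ : Fin n → Fin 3 => ∀ k, k ≠ i → k ≠ p i → τ k = τ (p k)) := by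
    apply Finset.filter_congr
    intro τ _
    constructor
    · intro h k h1 h2
      exact h k h2 (by rw [hp1]; exact h1)
    · intro h k h1 h2
      exact h k (by rw [hp1] at h2; exact h2) h1
  rw [hset, ← Finset.sum_add_distrib]
  have hterm : ∀ τ ∈ Finset.univ.filter
      (fun τ : Fin n → Fin 3 => ∀ k, k ≠ i → k ≠ p i → τ k = τ (p k)),
      ((List.ofFn fun k : Fin n => pauli3 (τ k)).prod * pauli3 (τ i) * pauli3 (τ (p i))).trace
        + ((List.ofFn fun k : Fin n => pauli3 (τ k)).prod * pauli3 (τ (p i)) * pauli3 (τ (p (p i)))).trace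
      = if τ i = τ (p i) then 2 * ((List.ofFn fun k : Fin n => pauli3 (τ k)).prod).trace else 0 := by
    intro τ _
    rw [hp1 i]
    exact trace_mul_anticomm _ _ _
  rw [Finset.sum_congr rfl hterm, ← Finset.sum_filter, Finset.filter_filter]
  have hset2 : (Finset.univ.filter
      (fun τ : Fin n → Fin 3 => (∀ k, k ≠ i → k ≠ p i → τ k = τ (p k)) ∧ τ i = τ (p i)))
      = Finset.univ.filter (fun τ : Fin n → Fin 3 => ∀ k, τ k = τ (p k)) := by
    apply Finset.filter_congr
    intro τ _
    constructor
    · rintro ⟨h, hip⟩ k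
      by_cases hki : k = i
      · subst hki; exact hip
      · by_cases hkpi : k = p i
        · subst hkpi; rw [hp1]; exact hip.symm
        · exact h k hki hkpi
    · intro h
      exact ⟨fun k _ _ => h k, h i⟩
  rw [hset2, TS, Finset.mul_sum]

lemma L2B_sumi {p : Equiv.Perm (Fin n)} (hp : p ∈ FPFI n) :
    ∑ i : Fin n, TS (n+2) (mB p i) = (n : ℂ) * TS n p := by
  have hre : ∑ i : Fin n, TS (n+2) (mB p (p i)) = ∑ i : Fin n, TS (n+2) (mB p i) :=
    Equiv.sum_comp p (fun i => TS (n+2) (mB p i))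
  have h2 : (2:ℂ) * ∑ i : Fin n, TS (n+2) (mB p i) = 2 * ((n:ℂ) * TS n p) := by
    calc (2:ℂ) * ∑ i : Fin n, TS (n+2) (mB p i)
        = (∑ i : Fin n, TS (n+2) (mB p i)) + ∑ i : Fin n, TS (n+2) (mB p (p i)) := by
          rw [hre]; ring
      _ = ∑ i : Fin n, (TS (n+2) (mB p i) + TS (n+2) (mB p (p i))) :=
          Finset.sum_add_distrib.symm
      _ = ∑ _i : Fin n, 2 * TS n p := Finset.sum_congr rfl (fun i _ => L2B_pair hp i)
      _ = 2 * ((n:ℂ) * TS n p) := by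
          rw [Finset.sum_const, Finset.card_univ, Fintype.card_fin, nsmul_eq_mul]
          push_cast; ring
  exact mul_left_cancel₀ two_ne_zero h2

section bij
variable (n)

private lemma caseA_bij_inj : ∀ p ∈ FPFI n, ∀ q ∈ FPFI n, extPerm p = extPerm q → p = q := by
  intro p _ q _ h
  apply Equiv.ext
  intro k
  have hk : extPerm p (emb k) = extPerm q (emb k) := by rw [h]
  rw [extPerm_emb, extPerm_emb, emb_inj] at hk
  exact hk

private lemma caseA_mem : ∀ p ∈ FPFI n,
    extPerm p ∈ (FPFI (n+2)).filter (fun m => m (vv n) = uu n) := by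
  intro p hp
  simp only [Finset.mem_filter]
  exact ⟨extPerm_mem hp, extPerm_vv p⟩

private lemma caseB_mem : ∀ x ∈ (FPFI n) ×ˢ (Finset.univ : Finset (Fin n)),
    mB x.1 x.2 ∈ (FPFI (n+2)).filter (fun m => ¬ m (vv n) = uu n) := by
  rintro ⟨p, i⟩ hx
  simp only [Finset.mem_product, Finset.mem_univ, and_true] at hx
  simp only [Finset.mem_filter]
  refine ⟨mB_mem p i hx, ?_⟩
  rw [mB_vv p i]
  exact emb_ne_uu _

private lemma caseB_inj : ∀ x ∈ (FPFI n) ×ˢ (Finset.univ : Finset (Fin n)),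
    ∀ y ∈ (FPFI n) ×ˢ (Finset.univ : Finset (Fin n)), mB x.1 x.2 = mB y.1 y.2 → x = y := by
  rintro ⟨p, i⟩ hx ⟨q, l⟩ hy h
  simp only [Finset.mem_product, Finset.mem_univ, and_true] at hx hy
  obtain ⟨hp1, hp2⟩ := mem_FPFI.mp hx
  obtain ⟨hq1, hq2⟩ := mem_FPFI.mp hy
  have hk : ∀ k, mB p i k = mB q l k := fun k => by rw [h]
  have hil : i = l := by
    have := hk (uu n)
    rw [mB_uu p i hp1 hp2, mB_uu q l hq1 hq2, emb_inj] at this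
    exact this
  subst hil
  have hpi : p i = q i := by
    have := hk (vv n)
    rw [mB_vv p i, mB_vv q i, emb_inj] at this
    exact this
  have hpq : p = q := by
    apply Equiv.ext
    intro k
    by_cases hki : k = i
    · subst hki; exact hpi
    · by_cases hkpi : k = p i
      · subst hkpi
        rw [hp1, hpi, hq1]
      · have := hk (emb k)
        rw [mB_other p i hp1 k hki hkpi, mB_other q i hq1 k hki (by rw [← hpi]; exact hkpi),
          emb_inj] at this
        exact this
  simp [hpq]

private lemma caseB_surj : ∀ m ∈ (FPFI (n+2)).filter (fun m => ¬ m (vv n) = uu n),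
    ∃ x, ∃ hx : x ∈ (FPFI n) ×ˢ (Finset.univ : Finset (Fin n)), mB x.1 x.2 = m := by
  intro m hm
  simp only [Finset.mem_filter] at hm
  obtain ⟨hmem, hnv⟩ := hm
  obtain ⟨h1, h2⟩ := mem_FPFI.mp hmem
  set c' := Equiv.swap (uu n) (m (vv n)) with hc'def
  have hc' : ∀ x, c' (c' x) = x := fun x => Equiv.swap_apply_self _ _ x
  set M' := c' * m * c' with hM'def
  have hM'mem : M' ∈ FPFI (n+2) := conj_mem_FPFI c' m hc' hmem
  have hM'v : M' (vv n) = uu n := by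
    have hfix : c' (vv n) = vv n :=
      Equiv.swap_apply_of_ne_of_ne uu_ne_vv.symm (Ne.symm (h2 (vv n)))
    show c' (m (c' (vv n))) = uu n
    rw [hfix, hc'def, Equiv.swap_apply_right]
  obtain ⟨p, hpmem, hpe⟩ := caseA_surj hM'mem hM'v
  have hmu_ne_u : m (uu n) ≠ uu n := h2 _
  have hmu_ne_v : m (uu n) ≠ vv n := fun h => hnv (by rw [← h, h1])
  have bound : (m (uu n)).1 < n := by
    have hlt := (m (uu n)).2
    have e1 : (uu n).1 = n := rfl
    have e2 : (vv n).1 = n + 1 := rfl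
    rw [Fin.ne_iff_vne, e1] at hmu_ne_u
    rw [Fin.ne_iff_vne, e2] at hmu_ne_v
    omega
  refine ⟨⟨p, ⟨(m (uu n)).1, bound⟩⟩, by simp [Finset.mem_product, hpmem], ?_⟩
  have hembi : emb (⟨(m (uu n)).1, bound⟩ : Fin n) = m (uu n) := by
    apply Fin.ext; simp [emb]
  have hpi : emb (p (⟨(m (uu n)).1, bound⟩ : Fin n)) = m (vv n) := by
    rw [← extPerm_emb, hpe, hembi]
    show c' (m (c' (m (uu n)))) = m (vv n)
    have hfix : c' (m (uu n)) = m (uu n) :=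
      Equiv.swap_apply_of_ne_of_ne hmu_ne_u (m.injective.ne uu_ne_vv)
    rw [hfix, h1, hc'def, Equiv.swap_apply_left]
  show mB p _ = m
  rw [mB, hpi, hpe, ← hc'def]
  apply Equiv.ext
  intro k
  rw [hM'def]
  simp only [Equiv.Perm.mul_apply]
  rw [hc', hc']

end bij

set_option maxHeartbeats 2000000 in
lemma L1 (n : ℕ) : (FPFI (n+2)).card = (n+1) * (FPFI n).card := by
  have hsplit := Finset.card_filter_add_card_filter_not
    (s := FPFI (n+2)) (p := fun m => m (vv n) = uu n)
  have hA : ((FPFI (n+2)).filter (fun m => m (vv n) = uu n)).card = (FPFI n).card :=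
    (Finset.card_bij (fun p _ => extPerm p) (caseA_mem n) (caseA_bij_inj n)
      (fun m hm => by
        simp only [Finset.mem_filter] at hm
        obtain ⟨p, hp, hpe⟩ := caseA_surj hm.1 hm.2
        exact ⟨p, hp, hpe⟩)).symm
  have hB : ((FPFI (n+2)).filter (fun m => ¬ m (vv n) = uu n)).card = (FPFI n).card * n := by
    have hbij := Finset.card_bij (s := (FPFI n) ×ˢ (Finset.univ : Finset (Fin n)))
      (t := (FPFI (n+2)).filter (fun m => ¬ m (vv n) = uu n))
      (fun (x : Equiv.Perm (Fin n) × Fin n) _ => mB x.1 x.2)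
      (caseB_mem n) (caseB_inj n) (caseB_surj n)
    rw [← hbij, Finset.card_product, Finset.card_univ, Fintype.card_fin]
  rw [← hsplit, hA, hB]
  ring

set_option maxHeartbeats 2000000 in
lemma L2 (n : ℕ) : ∑ m ∈ FPFI (n+2), TS (n+2) m = ((n:ℂ) + 3) * ∑ p ∈ FPFI n, TS n p := by
  rw [← Finset.sum_filter_add_sum_filter_not (FPFI (n+2)) (fun m => m (vv n) = uu n)]
  have hA : ∑ m ∈ (FPFI (n+2)).filter (fun m => m (vv n) = uu n), TS (n+2) m
      = 3 * ∑ p ∈ FPFI n, TS n p := by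
    rw [Finset.mul_sum]
    refine (Finset.sum_bij (fun p _ => extPerm p) (caseA_mem n) (caseA_bij_inj n)
      (fun m hm => by
        simp only [Finset.mem_filter] at hm
        obtain ⟨p, hp, hpe⟩ := caseA_surj hm.1 hm.2
        exact ⟨p, hp, hpe⟩) ?_).symm
    intro p hp
    exact (L2A hp).symm
  have hB : ∑ m ∈ (FPFI (n+2)).filter (fun m => ¬ m (vv n) = uu n), TS (n+2) m
      = (n:ℂ) * ∑ p ∈ FPFI n, TS n p := by
    have hbij := Finset.sum_bij (s := (FPFI n) ×ˢ (Finset.univ : Finset (Fin n)))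
      (t := (FPFI (n+2)).filter (fun m => ¬ m (vv n) = uu n))
      (f := fun x => TS (n+2) (mB x.1 x.2)) (g := TS (n+2))
      (fun (x : Equiv.Perm (Fin n) × Fin n) _ => mB x.1 x.2)
      (caseB_mem n) (caseB_inj n) (caseB_surj n) (fun x _ => rfl)
    rw [← hbij, Finset.sum_product]
    rw [Finset.mul_sum]
    refine Finset.sum_congr rfl fun p hp => ?_
    exact L2B_sumi hp
  rw [hA, hB]
  ring

lemma TS_zero (m : Equiv.Perm (Fin 0)) : TS 0 m = 2 := by
  rw [TS]
  rw [Finset.filter_true_of_mem (fun σ _ => fun i => i.elim0)]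
  have he : ∀ σ : Fin 0 → Fin 3, ((List.ofFn fun i => pauli3 (σ i)).prod).trace = 2 := by
    intro σ
    simp [Matrix.trace_one]
  simp only [he]
  rw [Finset.sum_const, Finset.card_univ]
  simp

lemma FPFI_zero : FPFI 0 = {1} := by
  ext m
  simp only [mem_FPFI, Finset.mem_singleton]
  constructor
  · intro _; exact Equiv.ext fun i => i.elim0
  · intro _; exact ⟨fun i => i.elim0, fun i => i.elim0⟩

lemma key (d : ℕ) : 0 < (FPFI (2*d)).card ∧
    ∑ m ∈ FPFI (2*d), TS (2*d) m = 2*(2*(d:ℂ)+1) * ((FPFI (2*d)).card : ℂ) := by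
  induction d with
  | zero =>
    constructor
    · show 0 < (FPFI 0).card
      rw [FPFI_zero]; simp
    · show ∑ m ∈ FPFI 0, TS 0 m = _
      rw [FPFI_zero, Finset.sum_singleton, TS_zero]
      show (2:ℂ) = 2*(2*((0:ℕ):ℂ)+1) * (({1} : Finset (Equiv.Perm (Fin 0))).card : ℂ)
      simp
  | succ d ih =>
    obtain ⟨ih1, ih2⟩ := ih
    constructor
    · show 0 < (FPFI (2*d+2)).card
      rw [L1]
      exact Nat.mul_pos (by omega) ih1
    · show ∑ m ∈ FPFI (2*d+2), TS (2*d+2) m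
        = 2*(2*((d+1:ℕ):ℂ)+1) * ((FPFI (2*d+2)).card : ℂ)
      rw [L2, ih2, L1]
      push_cast
      ring


/-- If `M` is a uniformly random perfect matching on `2d` elements, then
`E_M[Tr_sum(M)] = 2d + 1`. -/
theorem expected_trace_sum_random_matching (d : ℕ) :
    ((perfectMatchings d).card : ℂ)⁻¹ * ∑ m ∈ perfectMatchings d, trSum d m
      = 2 * d + 1 := by
  have hPM : perfectMatchings d = FPFI (2*d) := rfl
  have hTS : ∀ m : Equiv.Perm (Fin (2*d)), trSum d m = (1/2 : ℂ) * TS (2*d) m :=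
    fun m => rfl
  obtain ⟨hpos, hsum⟩ := key d
  have hc : ((FPFI (2*d)).card : ℂ) ≠ 0 := Nat.cast_ne_zero.mpr hpos.ne'
  have hstep : ∑ m ∈ FPFI (2*d), trSum d m
      = (1/2:ℂ) * ∑ m ∈ FPFI (2*d), TS (2*d) m := by
    rw [Finset.mul_sum]
    exact Finset.sum_congr rfl fun m _ => hTS m
  rw [hPM, hstep, hsum]
  field_simp
end

section
/- Let S be a set of n-qubit Pauli matrices and G_S its anti-commutativity graph. Then for any unit vector |\phi\rangle in \mathbb{C}^{2^n}, \sum_{P \in S} (\langle\phi|P|\phi\rangle)^2 \leq \vartheta(G_S). -/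
open Matrix

/-- The four single-qubit Paulis `I, X, Y, Z`. -/
noncomputable def pauli1 : Fin 4 → Matrix (Fin 2) (Fin 2) ℂ := ![1, PauliX, PauliY, PauliZ]

/-- The `n`-qubit Pauli string `⊗ₖ σ^{a k}`, as a matrix on `(Fin n → Fin 2)`. -/
noncomputable def pauliString (n : ℕ) (a : Fin n → Fin 4) :
    Matrix (Fin n → Fin 2) (Fin n → Fin 2) ℂ :=
  fun i j => ∏ k, pauli1 (a k) (i k) (j k)

/-- The largest eigenvalue of a real symmetric matrix, via the Rayleigh quotient. -/
noncomputable def lambdaMax {V : Type*} [Fintype V] (B : Matrix V V ℝ) : ℝ :=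
  sSup {r : ℝ | ∃ x : V → ℝ, (∑ i, (x i) ^ 2) = 1 ∧ r = x ⬝ᵥ B.mulVec x}

/-- The Lovász theta function. -/
noncomputable def lovaszTheta {V : Type*} [Fintype V] (G : SimpleGraph V) : ℝ :=
  sSup {t : ℝ | ∃ B : Matrix V V ℝ, B.IsSymm ∧ B.PosSemidef ∧
    (∀ i, B i i = 1) ∧ (∀ i j, G.Adj i j → B i j = 0) ∧ t = lambdaMax B}

/-- The anti-commutativity graph of a set `S` of (non-identity) Pauli strings. -/
noncomputable def antiCommGraph (n : ℕ) (S : Finset (Fin n → Fin 4)) :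
    SimpleGraph {a : Fin n → Fin 4 // a ∈ S} :=
  SimpleGraph.fromRel (fun a b =>
    pauliString n a.1 * pauliString n b.1 + pauliString n b.1 * pauliString n a.1 = 0)

section aux

lemma pauli1_conj (m : Fin 4) (i j : Fin 2) :
    (starRingEnd ℂ) (pauli1 m i j) = pauli1 m j i := by
  fin_cases m <;> fin_cases i <;> fin_cases j <;>
    simp [pauli1, PauliX, PauliY, PauliZ, Matrix.one_apply]

lemma pauli1_mul_self (m : Fin 4) : pauli1 m * pauli1 m = 1 := by
  fin_cases m <;> ext i j <;> fin_cases i <;> fin_cases j <;>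
    simp [pauli1, PauliX, PauliY, PauliZ, Matrix.mul_apply, Fin.sum_univ_two,
      Matrix.one_apply, Complex.I_mul_I]

lemma pauliString_conjTranspose (n : ℕ) (a : Fin n → Fin 4) :
    (pauliString n a)ᴴ = pauliString n a := by
  ext i j
  simp only [Matrix.conjTranspose_apply, pauliString, RCLike.star_def, map_prod, pauli1_conj]

lemma pauliString_mul_self (n : ℕ) (a : Fin n → Fin 4) :
    pauliString n a * pauliString n a = 1 := by
  ext i j
  rw [Matrix.mul_apply]
  simp only [pauliString]
  have h1 : ∀ k : Fin n → Fin 2, (∏ m, pauli1 (a m) (i m) (k m)) * ∏ m, pauli1 (a m) (k m) (j m)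
      = ∏ m, (pauli1 (a m) (i m) (k m) * pauli1 (a m) (k m) (j m)) := by
    intro k; rw [Finset.prod_mul_distrib]
  simp only [h1]
  rw [← Fintype.piFinset_univ, ← Finset.prod_univ_sum (fun _ => (Finset.univ : Finset (Fin 2)))
    (fun m b => pauli1 (a m) (i m) b * pauli1 (a m) b (j m))]
  have h2 : ∀ m, (∑ b, pauli1 (a m) (i m) b * pauli1 (a m) b (j m))
      = (1 : Matrix (Fin 2) (Fin 2) ℂ) (i m) (j m) := by
    intro m; rw [← Matrix.mul_apply, pauli1_mul_self]
  simp only [h2, Matrix.one_apply]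
  by_cases h : i = j
  · subst h; simp
  · rw [if_neg h]
    obtain ⟨m, hm⟩ := Function.ne_iff.mp h
    exact Finset.prod_eq_zero (Finset.mem_univ m) (by rw [if_neg hm])

lemma psd_entry_abs_le {V : Type*} [Fintype V] [DecidableEq V] {B : Matrix V V ℝ}
    (hpsd : B.PosSemidef) (hsymm : B.IsSymm) (hdiag : ∀ i, B i i = 1) (a b : V) :
    |B a b| ≤ 1 := by
  have key : ∀ c : ℝ, 0 ≤ 1 + 2 * c * B a b + c ^ 2 := by
    intro c
    have h := hpsd.dotProduct_mulVec_nonneg ((Pi.single a (1:ℝ) : V → ℝ) + c • (Pi.single b (1:ℝ) : V → ℝ))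
    simp only [star_trivial] at h
    rw [Matrix.mulVec_add, Matrix.mulVec_smul, add_dotProduct,
      smul_dotProduct, Matrix.mulVec_single, Matrix.mulVec_single] at h
    simp only [dotProduct_add, dotProduct_smul, single_dotProduct,
      mul_one, smul_eq_mul, Matrix.col_apply, MulOpposite.op_one, one_smul, one_mul] at h
    have hba : B b a = B a b := by rw [← hsymm.apply a b]
    rw [hba] at h
    nlinarith [h, hdiag a, hdiag b]
  have h1 := key 1
  have h2 := key (-1)
  rw [abs_le]; constructor <;> nlinarith

lemma rayleigh_le_card {V : Type*} [Fintype V] {B : Matrix V V ℝ}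
    (hpsd : B.PosSemidef) (hsymm : B.IsSymm) (hdiag : ∀ i, B i i = 1)
    (x : V → ℝ) (hx : (∑ i, (x i) ^ 2) = 1) :
    x ⬝ᵥ B.mulVec x ≤ (Fintype.card V : ℝ) := by
  classical
  have h1 : x ⬝ᵥ B.mulVec x ≤ ∑ a, ∑ b, |x a| * |x b| := by
    rw [dotProduct]
    apply Finset.sum_le_sum
    intro a _
    rw [Matrix.mulVec, dotProduct, Finset.mul_sum]
    apply Finset.sum_le_sum
    intro b _
    calc x a * (B a b * x b) ≤ |x a * (B a b * x b)| := le_abs_self _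
      _ = |x a| * |B a b| * |x b| := by
          rw [abs_mul, abs_mul, mul_assoc, mul_comm |B a b| _, ← mul_assoc]
      _ ≤ |x a| * 1 * |x b| := mul_le_mul_of_nonneg_right
            (mul_le_mul_of_nonneg_left (psd_entry_abs_le hpsd hsymm hdiag a b)
              (abs_nonneg _)) (abs_nonneg _)
      _ = |x a| * |x b| := by ring
  have h2 : ∑ a, ∑ b, |x a| * |x b| = (∑ a, |x a|) ^ 2 := by
    rw [sq, Finset.sum_mul_sum]
  have h3 : (∑ a, |x a|) ^ 2 ≤ (Fintype.card V : ℝ) := by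
    have := Finset.sum_mul_sq_le_sq_mul_sq Finset.univ (fun _ => (1:ℝ)) (fun a => |x a|)
    simp only [one_mul, one_pow, sq_abs] at this
    simpa [Finset.card_univ, hx] using this
  linarith

lemma lambdaMax_le_card {V : Type*} [Fintype V] {B : Matrix V V ℝ}
    (hpsd : B.PosSemidef) (hsymm : B.IsSymm) (hdiag : ∀ i, B i i = 1) :
    sSup {r : ℝ | ∃ x : V → ℝ, (∑ i, (x i) ^ 2) = 1 ∧ r = x ⬝ᵥ B.mulVec x}
      ≤ (Fintype.card V : ℝ) := by
  apply Real.sSup_le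
  · rintro r ⟨y, hy1, rfl⟩
    exact rayleigh_le_card hpsd hsymm hdiag y hy1
  · exact Nat.cast_nonneg _

end aux

/-- Uncertainty bound: for any unit state `φ`,
`∑_{P ∈ S} ⟨φ|P|φ⟩² ≤ ϑ(G_S)`. -/
theorem sum_sq_expectation_le_lovaszTheta (n : ℕ) (S : Finset (Fin n → Fin 4))
    (hS : ∀ a ∈ S, a ≠ fun _ => 0)
    (φ : (Fin n → Fin 2) → ℂ) (hφ : ∑ i, Complex.normSq (φ i) = 1) :
    ∑ a ∈ S, (Complex.re (∑ i, (starRingEnd ℂ) (φ i)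
        * (pauliString n a).mulVec φ i)) ^ 2
      ≤ lovaszTheta (antiCommGraph n S) := by
  classical
  let ψ : EuclideanSpace ℂ (Fin n → Fin 2) := WithLp.toLp 2 φ
  let w : {a : Fin n → Fin 4 // a ∈ S} → EuclideanSpace ℂ (Fin n → Fin 2) :=
    fun a => WithLp.toLp 2 ((pauliString n a.1).mulVec φ)
  have hinner : ∀ u v : EuclideanSpace ℂ (Fin n → Fin 2), (inner ℂ u v : ℂ)
      = star (u : (Fin n → Fin 2) → ℂ) ⬝ᵥ (v : (Fin n → Fin 2) → ℂ) := by
    intro u v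
    rw [PiLp.inner_apply]
    simp [RCLike.inner_apply, dotProduct, mul_comm]
  have hPQ : ∀ a b : {a : Fin n → Fin 4 // a ∈ S}, (inner ℂ (w a) (w b) : ℂ)
      = star φ ⬝ᵥ ((pauliString n a.1 * pauliString n b.1) *ᵥ φ) := by
    intro a b
    rw [hinner]
    show star ((pauliString n a.1) *ᵥ φ) ⬝ᵥ ((pauliString n b.1) *ᵥ φ) = _
    rw [Matrix.star_mulVec, pauliString_conjTranspose, ← Matrix.dotProduct_mulVec,
      Matrix.mulVec_mulVec]
  have hsφ : (star φ ⬝ᵥ φ) = ((1:ℝ) : ℂ) := by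
    have h1 : ∀ i, (star φ) i * φ i = (Complex.normSq (φ i) : ℂ) := by
      intro i
      simp [Complex.normSq_eq_conj_mul_self]
    rw [dotProduct]
    simp only [h1]
    rw [← Complex.ofReal_sum, hφ]
  have hdiagI : ∀ a : {a : Fin n → Fin 4 // a ∈ S}, (inner ℂ (w a) (w a) : ℂ) = 1 := by
    intro a
    rw [hPQ, pauliString_mul_self, Matrix.one_mulVec, hsφ, Complex.ofReal_one]
  -- the Gram matrix
  let B : Matrix {a : Fin n → Fin 4 // a ∈ S} {a : Fin n → Fin 4 // a ∈ S} ℝ :=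
    Matrix.of fun a b => (inner ℂ (w a) (w b) : ℂ).re
  have hBapply : ∀ a b, B a b = (inner ℂ (w a) (w b) : ℂ).re := fun a b => rfl
  have hsymmB : B.IsSymm := by
    ext a b
    show B b a = B a b
    rw [hBapply, hBapply, ← inner_conj_symm (w a) (w b), Complex.conj_re]
  have hdiagB : ∀ a, B a a = 1 := by
    intro a; rw [hBapply, hdiagI]; rfl
  have hedgeB : ∀ a b, (antiCommGraph n S).Adj a b → B a b = 0 := by
    intro a b hadj
    rw [antiCommGraph, SimpleGraph.fromRel_adj] at hadj
    have hAC : pauliString n a.1 * pauliString n b.1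
        + pauliString n b.1 * pauliString n a.1 = 0 := by
      rcases hadj.2 with h | h
      · exact h
      · rw [add_comm]; exact h
    have h0 : (inner ℂ (w a) (w b) : ℂ) + inner ℂ (w b) (w a) = 0 := by
      rw [hPQ a b, hPQ b a, ← dotProduct_add, ← Matrix.add_mulVec, hAC,
        Matrix.zero_mulVec, dotProduct_zero]
    have hc : (inner ℂ (w b) (w a) : ℂ) = (starRingEnd ℂ) (inner ℂ (w a) (w b)) :=
      (inner_conj_symm (w b) (w a)).symm
    rw [hc] at h0
    have h := congrArg Complex.re h0
    simp only [Complex.add_re, Complex.conj_re, Complex.zero_re] at h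
    rw [hBapply]
    linarith
  -- quadratic form
  have hquad : ∀ c : {a : Fin n → Fin 4 // a ∈ S} → ℝ,
      c ⬝ᵥ B.mulVec c = ‖∑ a, (c a : ℂ) • w a‖ ^ 2 := by
    intro c
    have h1 : (inner ℂ (∑ a, (c a : ℂ) • w a) (∑ a, (c a : ℂ) • w a) : ℂ)
        = ∑ a, ∑ b, ((c a : ℂ)) * (((c b : ℂ)) * inner ℂ (w a) (w b)) := by
      rw [sum_inner]
      apply Finset.sum_congr rfl
      intro a _
      rw [inner_sum]
      apply Finset.sum_congr rfl
      intro b _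
      rw [inner_smul_left, inner_smul_right, Complex.conj_ofReal]
    have h2 : ‖∑ a, (c a : ℂ) • w a‖ ^ 2
        = (inner ℂ (∑ a, (c a : ℂ) • w a) (∑ a, (c a : ℂ) • w a) : ℂ).re := by
      rw [← inner_self_eq_norm_sq (𝕜 := ℂ)]
      rfl
    rw [h2, h1, Complex.re_sum]
    rw [dotProduct]
    apply Finset.sum_congr rfl
    intro a _
    rw [Complex.re_sum, Matrix.mulVec, dotProduct, Finset.mul_sum]
    apply Finset.sum_congr rfl
    intro b _
    rw [Complex.re_ofReal_mul, Complex.re_ofReal_mul, hBapply]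
    ring
  have hpsdB : B.PosSemidef := by
    refine Matrix.PosSemidef.of_dotProduct_mulVec_nonneg ?_ ?_
    · ext a b
      rw [Matrix.conjTranspose_apply, star_trivial]
      exact congrFun (congrFun hsymmB a) b
    · intro c
      simp only [star_trivial]
      rw [hquad c]
      positivity
  have hpsiw : ∀ a : {a : Fin n → Fin 4 // a ∈ S},
      (∑ i, (starRingEnd ℂ) (φ i) * (pauliString n a.1).mulVec φ i)
      = (inner ℂ ψ (w a) : ℂ) := by
    intro a
    rw [hinner]
    rfl
  let x : {a : Fin n → Fin 4 // a ∈ S} → ℝ := fun a => (inner ℂ ψ (w a) : ℂ).re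
  have hLHS : ∑ a ∈ S, (Complex.re (∑ i, (starRingEnd ℂ) (φ i)
        * (pauliString n a).mulVec φ i)) ^ 2 = ∑ a : {a : Fin n → Fin 4 // a ∈ S}, x a ^ 2 := by
    rw [← Finset.sum_coe_sort S]
    apply Finset.sum_congr rfl
    intro a _
    rw [hpsiw a]
  set t := ∑ a : {a : Fin n → Fin 4 // a ∈ S}, x a ^ 2 with ht
  have htnn : 0 ≤ t := Finset.sum_nonneg (fun _ _ => sq_nonneg _)
  have hψnorm : ‖ψ‖ = 1 := by
    have h2 : ‖ψ‖ ^ 2 = 1 := by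
      rw [← inner_self_eq_norm_sq (𝕜 := ℂ)]
      have h3 : (inner ℂ ψ ψ : ℂ) = 1 := by
        rw [hinner]; rw [hsφ]; norm_num
      rw [h3]
      simp
    nlinarith [norm_nonneg ψ]
  have hinner_sum : ∀ c : {a : Fin n → Fin 4 // a ∈ S} → ℝ,
      (inner ℂ ψ (∑ a, (c a : ℂ) • w a) : ℂ).re = ∑ a, c a * x a := by
    intro c
    rw [inner_sum, Complex.re_sum]
    apply Finset.sum_congr rfl
    intro a _
    rw [inner_smul_right, Complex.re_ofReal_mul]
  have hRSbdd : BddAbove {r : ℝ | ∃ c : {a : Fin n → Fin 4 // a ∈ S} → ℝ,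
      (∑ i, (c i) ^ 2) = 1 ∧ r = c ⬝ᵥ B.mulVec c} := by
    refine ⟨(Fintype.card {a : Fin n → Fin 4 // a ∈ S} : ℝ), ?_⟩
    rintro r ⟨c, hc, rfl⟩
    exact rayleigh_le_card hpsdB hsymmB hdiagB c hc
  have hmain : t ≤ lambdaMax B := by
    rcases isEmpty_or_nonempty {a : Fin n → Fin 4 // a ∈ S} with hemp | hne
    · have ht0 : t = 0 := by rw [ht]; simp
      have hlz : lambdaMax B = 0 := by
        rw [lambdaMax]
        convert Real.sSup_empty using 2
        rw [Set.eq_empty_iff_forall_notMem]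
        rintro r ⟨c, hc, -⟩
        simp at hc
      rw [ht0, hlz]
    · by_cases ht0 : t = 0
      · obtain ⟨a0⟩ := hne
        have hc1 : (∑ i, ((Pi.single a0 (1:ℝ) : _ → ℝ) i) ^ 2) = 1 := by
          rw [Finset.sum_eq_single a0]
          · simp
          · intro b _ hb; rw [Pi.single_eq_of_ne hb]; ring
          · intro h; exact absurd (Finset.mem_univ a0) h
        have hval : (Pi.single a0 (1:ℝ) : _ → ℝ) ⬝ᵥ B.mulVec (Pi.single a0 (1:ℝ)) = 1 := by
          rw [Matrix.mulVec_single, single_dotProduct]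
          simp [hdiagB a0]
        have hmem : (1:ℝ) ∈ {r : ℝ | ∃ c : {a : Fin n → Fin 4 // a ∈ S} → ℝ,
            (∑ i, (c i) ^ 2) = 1 ∧ r = c ⬝ᵥ B.mulVec c} :=
          ⟨Pi.single a0 1, hc1, hval.symm⟩
        rw [ht0, lambdaMax]
        exact le_trans zero_le_one (le_csSup hRSbdd hmem)
      · have htpos : 0 < t := lt_of_le_of_ne htnn (Ne.symm ht0)
        have hs : Real.sqrt t ^ 2 = t := Real.sq_sqrt htnn
        have hspos : 0 < Real.sqrt t := Real.sqrt_pos.mpr htpos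
        set s := Real.sqrt t with hsdef
        let c : {a : Fin n → Fin 4 // a ∈ S} → ℝ := fun a => x a / s
        have hc1 : (∑ i, (c i) ^ 2) = 1 := by
          simp only [c, div_pow, hs]
          rw [← Finset.sum_div, ← ht]
          exact div_self ht0
        let vx := ∑ a, ((x a : ℝ) : ℂ) • w a
        have hvc : ∑ a, ((c a : ℝ) : ℂ) • w a = (((s : ℝ) : ℂ))⁻¹ • vx := by
          rw [Finset.smul_sum]
          apply Finset.sum_congr rfl
          intro a _
          rw [smul_smul]
          congr 1
          show ((x a / s : ℝ) : ℂ) = (((s:ℝ)):ℂ)⁻¹ * ((x a : ℝ) : ℂ)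
          push_cast
          rw [div_eq_inv_mul]
        have hrevx : (inner ℂ ψ vx : ℂ).re = t := by
          rw [hinner_sum x, ht]
          apply Finset.sum_congr rfl
          intro a _
          ring
        have hnvx : t ≤ ‖vx‖ := by
          have h2 := re_inner_le_norm (𝕜 := ℂ) ψ vx
          rw [hψnorm, one_mul] at h2
          rw [← hrevx]
          simpa using h2
        have hval : t ≤ c ⬝ᵥ B.mulVec c := by
          rw [hquad c, hvc, norm_smul, norm_inv, Complex.norm_real,
            Real.norm_eq_abs, abs_of_pos hspos]
          rw [mul_pow, inv_pow, hs]
          have hvxnn : 0 ≤ ‖vx‖ := norm_nonneg _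
          rw [inv_mul_eq_div, le_div_iff₀ htpos]
          nlinarith [hnvx]
        calc t ≤ c ⬝ᵥ B.mulVec c := hval
          _ ≤ lambdaMax B := le_csSup hRSbdd ⟨c, hc1, rfl⟩
  have hthetabdd : BddAbove {t' : ℝ |
      ∃ B' : Matrix {a : Fin n → Fin 4 // a ∈ S} {a : Fin n → Fin 4 // a ∈ S} ℝ,
      B'.IsSymm ∧ B'.PosSemidef ∧ (∀ i, B' i i = 1) ∧
      (∀ i j, (antiCommGraph n S).Adj i j → B' i j = 0) ∧ t' = lambdaMax B'} := by
    refine ⟨(Fintype.card {a : Fin n → Fin 4 // a ∈ S} : ℝ), ?_⟩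
    rintro r ⟨B', h1, h2, h3, h4, rfl⟩
    rw [lambdaMax]
    refine Real.sSup_le ?_ (Nat.cast_nonneg _)
    rintro r' ⟨y, hy, rfl⟩
    exact rayleigh_le_card h2 h1 h3 y hy
  have hmem2 : lambdaMax B ∈ {t' : ℝ |
      ∃ B' : Matrix {a : Fin n → Fin 4 // a ∈ S} {a : Fin n → Fin 4 // a ∈ S} ℝ,
      B'.IsSymm ∧ B'.PosSemidef ∧ (∀ i, B' i i = 1) ∧
      (∀ i j, (antiCommGraph n S).Adj i j → B' i j = 0) ∧ t' = lambdaMax B'} :=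
    ⟨B, hsymmB, hpsdB, hdiagB, hedgeB, rfl⟩
  rw [hLHS]
  calc t ≤ lambdaMax B := hmain
    _ ≤ lovaszTheta (antiCommGraph n S) := le_csSup hthetabdd hmem2
end
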